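/- Let r ≥ 5 be a prime, let ζ be a primitive r-th root of unity in ℚ(ζ_r), and let q be any prime ideal of ℤ[ζ] lying above 2, with associated valuation v_q (normalized so v_q(2) = 1). Let a, b be coprime integers with 2 dividing a+b (so a and b are both odd), and let F_{a,b} be the elliptic curve Y² = X(X − A_{a,b})(X + B_{a,b}). Then v_q(c₄(F_{a,b})) = 4, v_q(c₆(F_{a,b})) = 6, and v_q(Δ(F_{a,b})) = 4 + 4·v₂(a+b), where v₂(a+b) is the 2-adic valuation of the integer a+b. -/

import Mathlib

/-!
Odd integers and the elements `1 - ζ^k` (`0 < k < r`, divisors of the odd number `r`) are units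
at `q`, and `v_q` restricts to `v₂` on `ℤ` because `v_q(2) = 1`. As `a + b` is even and `ab` odd,
the identity `x² + (u + u⁻¹)xy + y² = (x + y)² + u⁻¹(1 - u)²xy` makes `f₁(a,b)` and `f₂(a,b)`
units, so `B` and `C` are units while `A = α(a+b)²` has valuation `2 v₂(a+b) ≥ 2`. Hence
`A² + AB + B² ≡ B² (mod q)` and `2A³ + 3A²B − 3AB² − 2B³ ≡ −2B³ (mod q²)` have valuations `0`
and `1`, and `v_q(Δ) = 4 + 2 v_q(A)`.
-/

open NumberField

/-- `α = ζ(1−ζ)(1−ζ⁻³)`, with `ζ⁻¹ = ζ^{r−1}` for `ζ` an `r`-th root of unity. -/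
def freyAlpha {R : Type*} [CommRing R] (r : ℕ) (ζ : R) : R :=
  ζ * (1 - ζ) * (1 - ζ ^ (r - 3))

/-- `β = (1−ζ)(1−ζ⁻¹)`. -/
def freyBeta {R : Type*} [CommRing R] (r : ℕ) (ζ : R) : R :=
  (1 - ζ) * (1 - ζ ^ (r - 1))

/-- `γ = −(1−ζ²)(1−ζ⁻²)`. -/
def freyGamma {R : Type*} [CommRing R] (r : ℕ) (ζ : R) : R :=
  -((1 - ζ ^ 2) * (1 - ζ ^ (r - 2)))

/-- `A_{a,b} = α(a+b)²`. -/
def freyA {R : Type*} [CommRing R] (r : ℕ) (ζ : R) (a b : ℤ) : R :=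
  freyAlpha r ζ * ((a : R) + (b : R)) ^ 2

/-- `B_{a,b} = β f₁(a,b)` with `f₁(x,y) = x² + (ζ² + ζ⁻²)xy + y²`. -/
def freyB {R : Type*} [CommRing R] (r : ℕ) (ζ : R) (a b : ℤ) : R :=
  freyBeta r ζ * ((a : R) ^ 2 + (ζ ^ 2 + ζ ^ (r - 2)) * (a : R) * (b : R) + (b : R) ^ 2)

/-- `C_{a,b} = γ f₂(a,b)` with `f₂(x,y) = x² + (ζ + ζ⁻¹)xy + y²`. -/
def freyC {R : Type*} [CommRing R] (r : ℕ) (ζ : R) (a b : ℤ) : R :=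
  freyGamma r ζ * ((a : R) ^ 2 + (ζ + ζ ^ (r - 1)) * (a : R) * (b : R) + (b : R) ^ 2)

/-- `c₄ = 2⁴(A² + AB + B²)` for the Frey curve `Y² = X(X − A)(X + B)`. -/
def freyC4 {R : Type*} [CommRing R] (r : ℕ) (ζ : R) (a b : ℤ) : R :=
  2 ^ 4 * (freyA r ζ a b ^ 2 + freyA r ζ a b * freyB r ζ a b + freyB r ζ a b ^ 2)

/-- `c₆ = 2⁵(2A³ + 3A²B − 3AB² − 2B³)`. -/
def freyC6 {R : Type*} [CommRing R] (r : ℕ) (ζ : R) (a b : ℤ) : R :=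
  2 ^ 5 * (2 * freyA r ζ a b ^ 3 + 3 * freyA r ζ a b ^ 2 * freyB r ζ a b -
    3 * freyA r ζ a b * freyB r ζ a b ^ 2 - 2 * freyB r ζ a b ^ 3)

/-- `Δ = 2⁴(ABC)²`. -/
def freyDelta {R : Type*} [CommRing R] (r : ℕ) (ζ : R) (a b : ℤ) : R :=
  2 ^ 4 * (freyA r ζ a b * freyB r ζ a b * freyC r ζ a b) ^ 2

section Valuation

variable {R : Type*} [CommRing R] {q : Ideal R}

theorem emultiplicity_span_neg (x : R) :
    emultiplicity q (Ideal.span {-x}) = emultiplicity q (Ideal.span {x}) := by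
  rw [Ideal.span_singleton_neg]

theorem emultiplicity_span_eq_zero {x : R} (hx : x ∉ q) :
    emultiplicity q (Ideal.span {x}) = 0 :=
  emultiplicity_eq_zero.mpr fun h ↦
    hx ((Ideal.span_singleton_le_iff_mem _).mp (Ideal.le_of_dvd h))

variable [IsDedekindDomain R]

theorem emultiplicity_span_mul (hq : Prime q) (x y : R) :
    emultiplicity q (Ideal.span {x * y}) =
      emultiplicity q (Ideal.span {x}) + emultiplicity q (Ideal.span {y}) := by
  rw [← Ideal.span_singleton_mul_span_singleton, emultiplicity_mul hq]

theorem emultiplicity_span_pow (hq : Prime q) (x : R) (n : ℕ) :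
    emultiplicity q (Ideal.span {x ^ n}) = n * emultiplicity q (Ideal.span {x}) := by
  rw [← Ideal.span_singleton_pow, emultiplicity_pow hq]

theorem natCast_le_emultiplicity_span_iff {x : R} {n : ℕ} :
    (n : ℕ∞) ≤ emultiplicity q (Ideal.span {x}) ↔ x ∈ q ^ n := by
  rw [← pow_dvd_iff_le_emultiplicity, Ideal.dvd_span_singleton]

theorem emultiplicity_span_add_of_mem_pow {x y : R} {n : ℕ}
    (hx : emultiplicity q (Ideal.span {x}) = n) (hyn : y ∈ q ^ (n + 1)) :
    emultiplicity q (Ideal.span {x + y}) = n := by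
  have hxn : x ∈ q ^ n := natCast_le_emultiplicity_span_iff.mp hx.ge
  rw [emultiplicity_eq_coe, Ideal.dvd_span_singleton, Ideal.dvd_span_singleton]
  refine ⟨Ideal.add_mem _ hxn (Ideal.pow_le_pow_right n.le_succ hyn), fun hxy ↦ ?_⟩
  have := natCast_le_emultiplicity_span_iff.mpr (by simpa using Ideal.sub_mem _ hxy hyn)
  rw [hx, Nat.cast_le] at this
  omega

end Valuation

section FreyInvariants

variable {R : Type*} [CommRing R] [IsDedekindDomain R] {q : Ideal R}

theorem emultiplicity_c4_eq_four (hq : Prime q)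
    (h2 : emultiplicity q (Ideal.span {(2 : R)}) = 1) {A B : R} (hA : A ∈ q) (hB : B ∉ q) :
    emultiplicity q (Ideal.span {2 ^ 4 * (A ^ 2 + A * B + B ^ 2)}) = 4 := by
  have hB2 : emultiplicity q (Ideal.span {B ^ 2}) = (0 : ℕ) := by
    rw [emultiplicity_span_pow hq, emultiplicity_span_eq_zero hB, mul_zero, Nat.cast_zero]
  have hS := emultiplicity_span_add_of_mem_pow hB2
    (y := A * (A + B)) (by simpa using Ideal.mul_mem_right _ _ hA)
  rw [show A ^ 2 + A * B + B ^ 2 = B ^ 2 + A * (A + B) by ring, emultiplicity_span_mul hq,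
    emultiplicity_span_pow hq, h2, hS]
  norm_num

theorem emultiplicity_c6_eq_six (hq : Prime q)
    (h2 : emultiplicity q (Ideal.span {(2 : R)}) = 1) {A B : R} (hA : A ∈ q ^ 2) (hB : B ∉ q) :
    emultiplicity q (Ideal.span
      {2 ^ 5 * (2 * A ^ 3 + 3 * A ^ 2 * B - 3 * A * B ^ 2 - 2 * B ^ 3)}) = 6 := by
  have h2B3 : emultiplicity q (Ideal.span {-(2 * B ^ 3)}) = (1 : ℕ) := by
    rw [emultiplicity_span_neg, emultiplicity_span_mul hq, emultiplicity_span_pow hq, h2,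
      emultiplicity_span_eq_zero hB]
    norm_num
  have hT := emultiplicity_span_add_of_mem_pow h2B3
    (y := A * (2 * A ^ 2 + 3 * A * B - 3 * B ^ 2)) (Ideal.mul_mem_right _ _ hA)
  rw [show 2 * A ^ 3 + 3 * A ^ 2 * B - 3 * A * B ^ 2 - 2 * B ^ 3 =
      -(2 * B ^ 3) + A * (2 * A ^ 2 + 3 * A * B - 3 * B ^ 2) by ring,
    emultiplicity_span_mul hq, emultiplicity_span_pow hq, h2, hT]
  norm_num

theorem emultiplicity_discr (hq : Prime q) (h2 : emultiplicity q (Ideal.span {(2 : R)}) = 1)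
    {A B C : R} (hB : B ∉ q) (hC : C ∉ q) :
    emultiplicity q (Ideal.span {2 ^ 4 * (A * B * C) ^ 2}) =
      4 + 2 * emultiplicity q (Ideal.span {A}) := by
  rw [emultiplicity_span_mul hq, emultiplicity_span_pow hq, emultiplicity_span_pow hq, h2,
    emultiplicity_span_mul hq, emultiplicity_span_mul hq, emultiplicity_span_eq_zero hB,
    emultiplicity_span_eq_zero hC]
  norm_num

end FreyInvariants

section IntCast

variable {R : Type*} [CommRing R] {q : Ideal R} {p : ℤ}

theorem intCast_notMem_of_not_dvd [q.IsPrime] (hp : Prime p) (hpq : (p : R) ∈ q) {m : ℤ}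
    (hm : ¬p ∣ m) : (m : R) ∉ q := fun hmq ↦ by
  obtain ⟨u, v, huv⟩ := (hp.irreducible.coprime_iff_not_dvd.mpr hm).intCast (R := R)
  exact q.one_notMem (huv ▸ q.add_mem (q.mul_mem_left u hpq) (q.mul_mem_left v hmq))

theorem emultiplicity_span_intCast [IsDedekindDomain R] (hq : Prime q) (hp : Prime p)
    (hpq : emultiplicity q (Ideal.span {(p : R)}) = 1) (m : ℤ) :
    emultiplicity q (Ideal.span {(m : R)}) = emultiplicity p m := by
  have := Ideal.isPrime_of_prime hq
  have hpq' : (p : R) ∈ q := by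
    simpa using (natCast_le_emultiplicity_span_iff (q := q) (n := 1)).mp hpq.ge
  rcases eq_or_ne m 0 with rfl | hm
  · rw [Int.cast_zero, Ideal.span_singleton_eq_bot.mpr rfl, ← Ideal.zero_eq_bot,
      emultiplicity_zero, emultiplicity_zero]
  have hfin : FiniteMultiplicity p m :=
    Int.finiteMultiplicity_iff.mpr ⟨by simpa [Int.isUnit_iff_natAbs_eq] using hp.not_isUnit, hm⟩
  obtain ⟨c, hc, hpc⟩ := hfin.exists_eq_pow_mul_and_not_dvd
  rw [hfin.emultiplicity_eq_multiplicity]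
  conv_lhs => rw [hc]
  rw [Int.cast_mul, Int.cast_pow, emultiplicity_span_mul hq, emultiplicity_span_pow hq, hpq,
    emultiplicity_span_eq_zero (intCast_notMem_of_not_dvd hp hpq' hpc)]
  simp

end IntCast

section RootsOfUnity

variable {R : Type*} [CommRing R] {q : Ideal R} {n : ℕ} {ζ : R}

theorem IsPrimitiveRoot.pow_mul_pow_sub (hζ : IsPrimitiveRoot ζ n) {k : ℕ} (hk : k ≤ n) :
    ζ ^ k * ζ ^ (n - k) = 1 := by
  rw [← pow_add, Nat.add_sub_cancel' hk, hζ.pow_eq_one]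

theorem sq_add_mul_add_sq_notMem [hq : q.IsPrime] {u u' x y : R} (huu' : u * u' = 1)
    (hu : 1 - u ∉ q) (hxy : x + y ∈ q) (hxy' : x * y ∉ q) :
    x ^ 2 + (u + u') * x * y + y ^ 2 ∉ q := by
  have hu' : u' ∉ q := q.notMem_of_isUnit (IsUnit.of_mul_eq_one_right u huu')
  have hkey : x ^ 2 + (u + u') * x * y + y ^ 2 = (x + y) ^ 2 + u' * (1 - u) ^ 2 * (x * y) := by
    linear_combination (x * y * (2 - u)) * huu'
  rw [hkey]
  intro h
  have : u' * (1 - u) ^ 2 * (x * y) ∈ q := by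
    simpa using q.sub_mem h (q.pow_mem_of_mem hxy 2 two_pos)
  exact hq.mul_notMem (hq.mul_notMem hu' fun h ↦ hu (hq.mem_of_pow_mem 2 h)) hxy' this

variable [IsDomain R]

theorem IsPrimitiveRoot.one_sub_pow_dvd (hζ : IsPrimitiveRoot ζ n) {k : ℕ} (hk0 : 0 < k)
    (hkn : k < n) : 1 - ζ ^ k ∣ (n : R) := by
  obtain ⟨m, rfl⟩ : ∃ m, n = m + 1 := ⟨n - 1, by omega⟩
  obtain ⟨j, rfl⟩ : ∃ j, k = j + 1 := ⟨k - 1, by omega⟩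
  rw [Nat.cast_succ, ← hζ.prod_one_sub_pow_eq_order]
  exact Finset.dvd_prod_of_mem _ (Finset.mem_range.mpr (by omega))

theorem IsPrimitiveRoot.one_sub_pow_notMem (hζ : IsPrimitiveRoot ζ n) (hnq : (n : R) ∉ q)
    {k : ℕ} (hk0 : 0 < k) (hkn : k < n) : 1 - ζ ^ k ∉ q :=
  fun h ↦ hnq (q.mem_of_dvd (hζ.one_sub_pow_dvd hk0 hkn) h)

end RootsOfUnity

section FreyCurve

variable {R : Type*} [CommRing R] {q : Ideal R} {r : ℕ} {ζ : R} {a b : ℤ}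

theorem freyA_mem_sq (hab : (a : R) + b ∈ q) : freyA r ζ a b ∈ q ^ 2 :=
  Ideal.mul_mem_left _ _ (Ideal.pow_mem_pow hab 2)

theorem emultiplicity_span_freyA [IsDedekindDomain R] (hq : Prime q) (hα : freyAlpha r ζ ∉ q) :
    emultiplicity q (Ideal.span {freyA r ζ a b}) =
      2 * emultiplicity q (Ideal.span {((a + b : ℤ) : R)}) := by
  rw [freyA, emultiplicity_span_mul hq, emultiplicity_span_pow hq,
    emultiplicity_span_eq_zero hα, zero_add, Int.cast_add, Nat.cast_ofNat]

variable [IsDomain R] [hq : q.IsPrime]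

theorem freyAlpha_notMem (hζ : IsPrimitiveRoot ζ r) (hrq : (r : R) ∉ q) (hr : 3 < r) :
    freyAlpha r ζ ∉ q :=
  hq.mul_notMem
    (hq.mul_notMem (q.notMem_of_isUnit (hζ.isUnit (by omega)))
      (by simpa using hζ.one_sub_pow_notMem hrq one_pos (by omega)))
    (hζ.one_sub_pow_notMem hrq (by omega) (by omega))

theorem freyBeta_notMem (hζ : IsPrimitiveRoot ζ r) (hrq : (r : R) ∉ q) (hr : 1 < r) :
    freyBeta r ζ ∉ q :=
  hq.mul_notMem (by simpa using hζ.one_sub_pow_notMem hrq one_pos hr)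
    (hζ.one_sub_pow_notMem hrq (by omega) (by omega))

theorem freyGamma_notMem (hζ : IsPrimitiveRoot ζ r) (hrq : (r : R) ∉ q) (hr : 2 < r) :
    freyGamma r ζ ∉ q := by
  rw [freyGamma, neg_mem_iff]
  exact hq.mul_notMem (hζ.one_sub_pow_notMem hrq two_pos hr)
    (hζ.one_sub_pow_notMem hrq (by omega) (by omega))

theorem freyB_notMem (hζ : IsPrimitiveRoot ζ r) (hrq : (r : R) ∉ q) (hr : 2 < r)
    (hab : (a : R) + b ∈ q) (hab' : (a : R) * b ∉ q) : freyB r ζ a b ∉ q :=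
  hq.mul_notMem (freyBeta_notMem hζ hrq (by omega))
    (sq_add_mul_add_sq_notMem (hζ.pow_mul_pow_sub (k := 2) (by omega))
      (hζ.one_sub_pow_notMem hrq two_pos hr) hab hab')

theorem freyC_notMem (hζ : IsPrimitiveRoot ζ r) (hrq : (r : R) ∉ q) (hr : 2 < r)
    (hab : (a : R) + b ∈ q) (hab' : (a : R) * b ∉ q) : freyC r ζ a b ∉ q :=
  hq.mul_notMem (freyGamma_notMem hζ hrq hr)
    (sq_add_mul_add_sq_notMem
      (by simpa only [pow_one] using hζ.pow_mul_pow_sub (k := 1) (by omega))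
      (by simpa using hζ.one_sub_pow_notMem hrq one_pos (by omega)) hab hab')

end FreyCurve

/-- Let `r ≥ 5` be a prime, `ζ` a primitive `r`-th root of unity in the ring of
integers `ℤ[ζ]` of `ℚ(ζ_r)`, and `q` a prime ideal of `ℤ[ζ]` above `2`, with
valuation `v_q` normalized by `v_q(2) = 1`. Let `a, b` be coprime integers with
`2 ∣ a+b`. Then `v_q(c₄) = 4`, `v_q(c₆) = 6` and `v_q(Δ) = 4 + 4·v₂(a+b)` for the
Frey curve `Y² = X(X − A_{a,b})(X + B_{a,b})`. -/
theorem stmt_14 (r : ℕ) (hr : r.Prime) (hr5 : 5 ≤ r)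
    (K : Type*) [Field K] [CharZero K]
    [IsCyclotomicExtension {r} ℚ K]
    (ζ : 𝓞 K) (hζ : IsPrimitiveRoot ζ r)
    (q : Ideal (𝓞 K)) (hq : q.IsPrime)
    (hq2 : emultiplicity q (Ideal.span {(2 : 𝓞 K)}) = 1)
    (a b : ℤ) (hab : IsCoprime a b) (h2ab : (2 : ℤ) ∣ a + b) :
    emultiplicity q (Ideal.span {freyC4 r ζ a b}) = 4 ∧
    emultiplicity q (Ideal.span {freyC6 r ζ a b}) = 6 ∧
    emultiplicity q (Ideal.span {freyDelta r ζ a b}) =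
      4 + 4 * emultiplicity (2 : ℤ) (a + b) := by
  have : NumberField K := IsCyclotomicExtension.numberField {r} ℚ K
  have h2q : ((2 : ℤ) : 𝓞 K) ∈ q := by
    simpa using (natCast_le_emultiplicity_span_iff (q := q) (n := 1)).mp hq2.ge
  have hqp : Prime q := Ideal.prime_of_isPrime (by rintro rfl; simp at h2q) hq
  have hodd (m : ℤ) (hm : ¬ 2 ∣ m) : (m : 𝓞 K) ∉ q :=
    intCast_notMem_of_not_dvd Int.prime_two h2q hm
  have hrq : (r : 𝓞 K) ∉ q := by
    have := hr.eq_one_or_self_of_dvd 2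
    exact_mod_cast hodd r (by omega)
  have habq : (a : 𝓞 K) + b ∈ q := by
    exact_mod_cast q.mem_of_dvd (map_dvd (Int.castRingHom (𝓞 K)) h2ab) h2q
  have hab' : (a : 𝓞 K) * b ∉ q := by
    have hab2 : ¬ (2 : ℤ) ∣ a * b := fun h ↦ by
      have h2 : 2 ∣ a ∧ 2 ∣ b := by rcases Int.prime_two.dvd_mul.mp h with h | h <;> omega
      exact Int.prime_two.not_isUnit (hab.isUnit_of_dvd' h2.1 h2.2)
    exact_mod_cast hodd _ hab2
  have hB := freyB_notMem hζ hrq (by omega) habq hab'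
  have hA := freyA_mem_sq (r := r) (ζ := ζ) habq
  refine ⟨emultiplicity_c4_eq_four hqp hq2 (Ideal.pow_le_self two_ne_zero hA) hB,
    emultiplicity_c6_eq_six hqp hq2 hA hB, ?_⟩
  rw [freyDelta, emultiplicity_discr hqp hq2 hB (freyC_notMem hζ hrq (by omega) habq hab'),
    emultiplicity_span_freyA hqp (freyAlpha_notMem hζ hrq (by omega)),
    emultiplicity_span_intCast hqp Int.prime_two (by simpa using hq2)]
  ring
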